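/- Suppose the finite simplicial graph Γ contains no domination-equivalent pair of vertices and no separating intersection of links. Then every finite-index nilpotent subgroup of Out(A_Γ) has nilpotency class at least depth(Γ). -/

import Mathlib

open SimpleGraph
open scoped commutatorElement

variable {V : Type*}

/-- The link of a vertex: the set of adjacent vertices. -/
def lk (G : SimpleGraph V) (x : V) : Set V := {z | G.Adj x z}

/-- The star of a vertex: the link together with the vertex itself. -/
def st (G : SimpleGraph V) (x : V) : Set V := insert x (lk G x)

/-- `Dominates G y x` means `y ≥ x`, i.e. `lk x ⊆ st y`. -/
def Dominates (G : SimpleGraph V) (y x : V) : Prop := lk G x ⊆ st G y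

/-- `Γ` contains a domination-equivalent pair of (distinct) vertices. -/
def DomEquivPair (G : SimpleGraph V) : Prop :=
  ∃ x y : V, x ≠ y ∧ Dominates G x y ∧ Dominates G y x

/-- `S` separates `u` from `v`: both lie outside `S` and they are not joined by a path
in the induced subgraph on the complement of `S`. -/
def SeparatesFrom (G : SimpleGraph V) (S : Set V) (u v : V) : Prop :=
  ∃ (hu : u ∈ Sᶜ) (hv : v ∈ Sᶜ),
    ¬ (G.induce Sᶜ).Reachable ⟨u, hu⟩ ⟨v, hv⟩

/-- `Γ` has a separating intersection of links: there are distinct non-adjacent vertices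
`x, y` and a vertex `z` whose connected component in the induced subgraph on the
complement of `lk x ∩ lk y` contains neither `x` nor `y`. -/
def SepIntLinks (G : SimpleGraph V) : Prop :=
  ∃ x y : V, x ≠ y ∧ ¬ G.Adj x y ∧ ∃ z : V,
    SeparatesFrom G (lk G x ∩ lk G y) z x ∧ SeparatesFrom G (lk G x ∩ lk G y) z y

/-- `Y` is the vertex set of a connected component of the induced subgraph on `S`. -/
def IsCompOf (G : SimpleGraph V) (S : Set V) (Y : Set V) : Prop :=
  Y.Nonempty ∧ Y ⊆ S ∧
    ∀ a : S, a.1 ∈ Y → ∀ b : S, ((G.induce S).Reachable a b ↔ b.1 ∈ Y)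

/-- The defining relators of the right-angled Artin group of `G`. -/
def raagRels (G : SimpleGraph V) : Set (FreeGroup V) :=
  {r | ∃ x y : V, G.Adj x y ∧ r = ⁅FreeGroup.of x, FreeGroup.of y⁆}

/-- The right-angled Artin group of a graph. -/
abbrev RAAG (G : SimpleGraph V) : Type _ := PresentedGroup (raagRels G)

/-- The generator of the RAAG corresponding to a vertex. -/
def gen (G : SimpleGraph V) (x : V) : RAAG G := PresentedGroup.of x

/-- The subgroup of inner automorphisms. -/
def Inn (H : Type*) [Group H] : Subgroup (MulAut H) := (MulAut.conj : H →* MulAut H).range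

instance Inn.normal (H : Type*) [Group H] : (Inn H).Normal := by
  constructor
  intro n hn g
  obtain ⟨h, rfl⟩ := hn
  refine ⟨g h, ?_⟩
  ext x
  simp [MulAut.conj]

/-- The outer automorphism group `Out(A_Γ)` of the RAAG of `G`. -/
abbrev OutG (G : SimpleGraph V) := MulAut (RAAG G) ⧸ Inn (RAAG G)

/-- A group contains a subgroup isomorphic to the free group of rank 2. -/
def HasFreeRankTwo (H : Type*) [Group H] : Prop :=
  ∃ K : Subgroup H, Nonempty (↥K ≃* FreeGroup (Fin 2))

/-- A group is virtually nilpotent. -/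
def VirtNilpotent (H : Type*) [Group H] : Prop :=
  ∃ K : Subgroup H, K.FiniteIndex ∧ Group.IsNilpotent ↥K

/-- `φ` is a transvection with multiplier `x^ε` acting on the generator `y`
(either a right or a left transvection). -/
def IsTransvection (G : SimpleGraph V) (φ : MulAut (RAAG G)) (x y : V) (ε : ℤ) : Prop :=
  x ≠ y ∧ Dominates G x y ∧ (ε = 1 ∨ ε = -1) ∧
  (φ (gen G y) = gen G y * (gen G x) ^ ε ∨ φ (gen G y) = (gen G x) ^ ε * gen G y) ∧
  ∀ z : V, z ≠ y → φ (gen G z) = gen G z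

/-- `φ` is a non-inner partial conjugation with multiplier `x^ε`, conjugating exactly the
generators in the connected component `Y` of the complement of `st x`. -/
def IsPartialConj (G : SimpleGraph V) (φ : MulAut (RAAG G)) (x : V) (ε : ℤ) (Y : Set V) : Prop :=
  (ε = 1 ∨ ε = -1) ∧ IsCompOf G ((st G x)ᶜ) Y ∧ ((st G x ∪ Y)ᶜ).Nonempty ∧
  (∀ y ∈ Y, φ (gen G y) = (gen G x) ^ (-ε) * gen G y * (gen G x) ^ ε) ∧
  ∀ z : V, z ∉ Y → φ (gen G z) = gen G z

/-- A domination chain, listed with the dominant member first. -/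
def IsDomChain (G : SimpleGraph V) (l : List V) : Prop :=
  l ≠ [] ∧ l.Nodup ∧ l.Chain' (fun a b => Dominates G a b)

/-- The domination depth of a vertex: the maximal length of a domination chain with
top member `x`. -/
noncomputable def domDepth (G : SimpleGraph V) (x : V) : ℕ :=
  sSup {n | ∃ l : List V, IsDomChain G l ∧ l.head? = some x ∧ l.length = n + 1}

/-- A star-separation preserving domination chain with top member `xm` and
bottom member `x1`. -/
def IsSSPChain (G : SimpleGraph V) (l : List V) (xm x1 : V) : Prop :=
  IsDomChain G l ∧ l.head? = some xm ∧ l.getLast? = some x1 ∧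
  ∃ Y1 Y2 : Set V, IsCompOf G ((st G x1)ᶜ) Y1 ∧ IsCompOf G ((st G x1)ᶜ) Y2 ∧
    Y1 ≠ Y2 ∧ ¬ Y1 ⊆ st G xm ∧ ¬ Y2 ⊆ st G xm

/-- The star-separation depth of a vertex: `1 +` the maximal length of a star-separation
preserving chain with top member `x` (this is `0` if there is no such chain, as then the
set below is empty). -/
noncomputable def ssDepth (G : SimpleGraph V) (x : V) : ℕ :=
  sSup {n | ∃ (l : List V) (x1 : V), IsSSPChain G l x x1 ∧ l.length = n}

/-- The depth of a vertex. -/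
noncomputable def vdepth (G : SimpleGraph V) (x : V) : ℕ := max (domDepth G x) (ssDepth G x)

/-- The depth of the graph `G`. -/
noncomputable def gdepth (G : SimpleGraph V) : ℕ := sSup {n | ∃ x : V, n = vdepth G x}

/-- The set of images in `Out(A_Γ)` of all transvections and all non-inner partial
conjugations. -/
def TvPcSet (G : SimpleGraph V) : Set (OutG G) :=
  {g | ∃ φ : MulAut (RAAG G), (QuotientGroup.mk φ : OutG G) = g ∧
    ((∃ x y ε, IsTransvection G φ x y ε) ∨ (∃ x ε Y, IsPartialConj G φ x ε Y))}

/-- The subgroup `N` of `Out(A_Γ)` generated by the images of all transvections and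
all non-inner partial conjugations. -/
def Ngrp (G : SimpleGraph V) : Subgroup (OutG G) := Subgroup.closure (TvPcSet G)

/-!
Let `K` have finite index in `Out(A_Γ)`; then `K` contains nonzero powers of all transvections and
partial conjugations. Along a domination chain `x_m ≥ ⋯ ≥ x_1`, start from such a power of the
transvection `x_1 ↦ x_1 x_2^k` (for the domination depth) or of the partial conjugation by `x_1` of a
component of `Γ ∖ st x_1` (for the star-separation depth), and take successive commutators with
powers in `K` of the transvections `x_i ↦ x_i x_{i+1}^k`. Each commutator goes one step further down
the lower central series of `K`, and the automorphism obtained multiplies, resp. conjugates, the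
generators it moves by a word whose exponent sum in the top vertex `x_m` is nonzero. Such an
automorphism is not inner: in the first case because inner automorphisms preserve exponent sums, in
the second by passing to a Heisenberg quotient, which needs the chain to avoid the conjugated
component. This is where the absence of separating intersections of links enters: it forces every
vertex dominating `x_1` into `st x_1`.
-/

theorem exists_ne_zero_mem_of_map_add {Q : Type*} [Group Q] {K : Subgroup Q}
    (hK : K.FiniteIndex) (f : ℤ → Q) (hf : ∀ n k, f (n + k) = f n * f k) :
    ∃ n ≠ 0, f n ∈ K := by
  have hpow : ∀ m : ℕ, f m = f 1 ^ m := fun m => by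
    induction m with
    | zero => simpa using hf 0 0
    | succ m ih => rw [Nat.cast_succ, hf, ih, pow_succ]
  obtain ⟨m, hm, -, hmK⟩ := Subgroup.exists_pow_mem_of_index_ne_zero hK.index_ne_zero (f 1)
  exact ⟨m, by exact_mod_cast hm.ne', hpow m ▸ hmK⟩

namespace MulAut

variable {H : Type*} [Group H] {T W : MulAut H} {x w : H}

theorem commutatorElement_apply (T W : MulAut H) (x : H) : ⁅T, W⁆ x = T (W (T⁻¹ (W⁻¹ x))) :=
  rfl

theorem commutatorElement_apply_eq_self (hWx : W x = x) (hWTx : W (T⁻¹ x) = T⁻¹ x) :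
    ⁅T, W⁆ x = x := by
  have hWx' : W⁻¹ x = x := by rw [inv_def, MulEquiv.symm_apply_eq, hWx]
  rw [commutatorElement_apply, hWx', hWTx, apply_inv_self]

theorem commutatorElement_apply_of_apply_eq_mul (hTx : T x = x) (hWx : W x = x * w)
    (hWw : W w = w) (hWTw : W (T⁻¹ w) = T⁻¹ w) : ⁅T, W⁆ x = x * (T w * w⁻¹) := by
  have hWx' : W⁻¹ x = x * w⁻¹ := by
    rw [inv_def, MulEquiv.symm_apply_eq, map_mul, map_inv, hWx, hWw, mul_inv_cancel_right]
  have hTx' : T⁻¹ x = x := by rw [inv_def, MulEquiv.symm_apply_eq, hTx]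
  rw [commutatorElement_apply, hWx', map_mul, map_inv, hTx', map_mul, map_inv, hWx, hWTw,
    map_mul, map_mul, map_inv, hTx, apply_inv_self, mul_assoc]

theorem commutatorElement_apply_of_apply_eq_conj (hTx : T x = x) (hWx : W x = w⁻¹ * x * w)
    (hWw : W w = w) (hWTw : W (T⁻¹ w) = T⁻¹ w) :
    ⁅T, W⁆ x = (T w * w⁻¹)⁻¹ * x * (T w * w⁻¹) := by
  have hWx' : W⁻¹ x = w * x * w⁻¹ := by
    rw [inv_def, MulEquiv.symm_apply_eq, map_mul, map_mul, map_inv, hWx, hWw]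
    group
  have hTx' : T⁻¹ x = x := by rw [inv_def, MulEquiv.symm_apply_eq, hTx]
  simp only [commutatorElement_apply, hWx', map_mul, map_inv, hTx', hWx, hWTw, hTx,
    apply_inv_self]
  group

end MulAut

/-- The integral Heisenberg group, `⟨a, b, c⟩` standing for the matrix
`[[1, a, c], [0, 1, b], [0, 0, 1]]`. -/
@[ext]
structure Heisenberg where
  a : ℤ
  b : ℤ
  c : ℤ

namespace Heisenberg

instance : Mul Heisenberg := ⟨fun x y => ⟨x.a + y.a, x.b + y.b, x.c + y.c + x.a * y.b⟩⟩

instance : One Heisenberg := ⟨⟨0, 0, 0⟩⟩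

instance : Inv Heisenberg := ⟨fun x => ⟨-x.a, -x.b, x.a * x.b - x.c⟩⟩

@[simp] theorem mul_a (x y : Heisenberg) : (x * y).a = x.a + y.a := rfl
@[simp] theorem mul_b (x y : Heisenberg) : (x * y).b = x.b + y.b := rfl
@[simp] theorem mul_c (x y : Heisenberg) : (x * y).c = x.c + y.c + x.a * y.b := rfl
@[simp] theorem one_a : (1 : Heisenberg).a = 0 := rfl
@[simp] theorem one_b : (1 : Heisenberg).b = 0 := rfl
@[simp] theorem one_c : (1 : Heisenberg).c = 0 := rfl
@[simp] theorem inv_a (x : Heisenberg) : x⁻¹.a = -x.a := rfl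
@[simp] theorem inv_b (x : Heisenberg) : x⁻¹.b = -x.b := rfl
@[simp] theorem inv_c (x : Heisenberg) : x⁻¹.c = x.a * x.b - x.c := rfl

instance : Group Heisenberg :=
  Group.ofLeftAxioms (fun _ _ _ => by ext <;> simp <;> ring) (fun _ => by ext <;> simp)
    (fun _ => by ext <;> simp)

def fstHom : Heisenberg →* Multiplicative ℤ where
  toFun x := Multiplicative.ofAdd x.a
  map_one' := rfl
  map_mul' _ _ := rfl

theorem a_eq_zero_of_commute {x : Heisenberg} (h : Commute x ⟨0, 1, 0⟩) : x.a = 0 := by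
  simpa using congrArg Heisenberg.c h.eq

end Heisenberg

section Graph

variable {G : SimpleGraph V}

theorem Dominates.refl (x : V) : Dominates G x x :=
  fun _ h => Set.mem_insert_of_mem _ h

theorem Dominates.trans {x y z : V} (hxy : Dominates G x y) (hyz : Dominates G y z) :
    Dominates G x z := by
  intro w hzw
  rcases hyz hzw with rfl | hyw
  · rcases hxy (G.adj_symm hzw) with rfl | hxz
    · exact Set.mem_insert_of_mem _ hzw
    · rcases hyz (G.adj_symm hxz) with rfl | hwx
      exacts [Set.mem_insert _ _, Set.mem_insert_of_mem _ (G.adj_symm hwx)]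
  · exact hxy hyw

theorem IsDomChain.dominates_getLast {l : List V} (hl : IsDomChain G l) {v : V} (hv : v ∈ l) :
    Dominates G v (l.getLast hl.1) :=
  hl.2.2.backwards_induction (Dominates G · (l.getLast hl.1)) l (fun _ _ h₁ h₂ => h₁.trans h₂)
    (fun _ => Dominates.refl _) v hv

theorem IsDomChain.cons_cons {y z : V} {s : List V} (h : IsDomChain G (y :: z :: s)) :
    y ≠ z ∧ Dominates G y z ∧ IsDomChain G (z :: s) := by
  obtain ⟨-, hnd, hc⟩ := h
  refine ⟨fun hyz => (List.nodup_cons.1 hnd).1 (hyz ▸ List.mem_cons_self), ?_, ?_⟩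
  · exact (List.isChain_cons_cons.1 hc).1
  · exact ⟨List.cons_ne_nil _ _, hnd.of_cons, hc.tail⟩

theorem IsDomChain.of_append_singleton {y x : V} {s : List V}
    (h : IsDomChain G (y :: s ++ [x])) :
    IsDomChain G (y :: s) ∧ Dominates G ((y :: s).getLast (List.cons_ne_nil y s)) x ∧
      x ∉ y :: s := by
  obtain ⟨-, hnd, hc⟩ := h
  replace hc : List.IsChain (Dominates G) (y :: s ++ [x]) := hc
  rw [List.isChain_append] at hc
  rw [List.nodup_append] at hnd
  refine ⟨⟨List.cons_ne_nil _ _, hnd.1, hc.1⟩, ?_, fun hx => hnd.2.2 x hx x (by simp) rfl⟩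
  exact hc.2.2 _ (List.getLast?_eq_some_getLast _) x rfl

theorem IsCompOf.mem_of_adj {S Y : Set V} (hY : IsCompOf G S Y) {u v : V} (hu : u ∈ Y)
    (huv : G.Adj u v) (hv : v ∈ S) : v ∈ Y :=
  (hY.2.2 ⟨u, hY.2.1 hu⟩ hu ⟨v, hv⟩).1 (Adj.reachable (by simpa using huv))

theorem IsCompOf.subset_of_mem {S Y₁ Y₂ : Set V} (hY₁ : IsCompOf G S Y₁)
    (hY₂ : IsCompOf G S Y₂) {v : V} (hv₁ : v ∈ Y₁) (hv₂ : v ∈ Y₂) : Y₁ ⊆ Y₂ := fun u hu =>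
  (hY₂.2.2 ⟨v, hY₁.2.1 hv₁⟩ hv₂ ⟨u, hY₁.2.1 hu⟩).1 ((hY₁.2.2 _ hv₁ _).2 hu)

theorem IsCompOf.notMem_of_ne {S Y₁ Y₂ : Set V} (hY₁ : IsCompOf G S Y₁)
    (hY₂ : IsCompOf G S Y₂) (hne : Y₁ ≠ Y₂) {v : V} (hv : v ∈ Y₁) : v ∉ Y₂ := fun hv₂ =>
  hne ((hY₁.subset_of_mem hY₂ hv hv₂).antisymm (hY₂.subset_of_mem hY₁ hv₂ hv))

theorem IsCompOf.notMem_self {a : V} {Y : Set V} (hY : IsCompOf G (st G a)ᶜ Y) : a ∉ Y :=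
  fun h => hY.2.1 h (Set.mem_insert a _)

theorem IsCompOf.mem_of_reachable {a : V} {Y T : Set V} (hY : IsCompOf G (st G a)ᶜ Y)
    (hT : ∀ v ∈ T, ¬ G.Adj a v) {u v : T} (huv : (G.induce T).Reachable u v) (hu : ↑u ∈ Y) :
    ↑v ∈ Y := by
  obtain ⟨p⟩ := huv
  induction p with
  | nil => exact hu
  | @cons u w v h _ ih =>
    have h' : G.Adj u w := by simpa using h
    refine ih (hY.mem_of_adj hu h' ?_)
    rintro (hwa | haw)
    · exact hY.2.1 hu (Set.mem_insert_of_mem _ (hwa ▸ G.adj_symm h'))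
    · exact hT w w.2 haw

theorem mem_st_of_dominates (h : ¬ SepIntLinks G) {x₁ y : V} {Y₁ Y₂ : Set V}
    (hY₁ : IsCompOf G (st G x₁)ᶜ Y₁) (hY₂ : IsCompOf G (st G x₁)ᶜ Y₂) (hne : Y₁ ≠ Y₂)
    (hd : Dominates G y x₁) : y ∈ st G x₁ := by
  by_contra hy
  obtain ⟨Y, hY, hyY⟩ : ∃ Y, IsCompOf G (st G x₁)ᶜ Y ∧ y ∉ Y := by
    by_cases hy₁ : y ∈ Y₁
    exacts [⟨Y₂, hY₂, hY₁.notMem_of_ne hY₂ hne hy₁⟩, ⟨Y₁, hY₁, hy₁⟩]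
  obtain ⟨z, hz⟩ := hY.1
  have hT : ∀ v ∈ (lk G y ∩ lk G x₁)ᶜ, ¬ G.Adj x₁ v := fun v hv hxv => by
    rcases hd hxv with rfl | hyv
    exacts [hy (Set.mem_insert_of_mem _ hxv), hv ⟨hyv, hxv⟩]
  have hzT : z ∈ (lk G y ∩ lk G x₁)ᶜ := fun hzl => hY.2.1 hz (Set.mem_insert_of_mem _ hzl.2)
  refine h ⟨y, x₁, fun hyx => hy (hyx ▸ Set.mem_insert _ _), fun hyx => hy
    (Set.mem_insert_of_mem _ (G.adj_symm hyx)), z, ⟨hzT, fun hyl => G.irrefl hyl.1, ?_⟩,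
    ⟨hzT, fun hxl => G.irrefl hxl.2, ?_⟩⟩
  · exact fun hr => hyY (hY.mem_of_reachable hT hr hz)
  · exact fun hr => hY.notMem_self (hY.mem_of_reachable hT hr hz)

end Graph

namespace RAAG

variable {G : SimpleGraph V}

def lift {H : Type*} [Group H] (f : V → H) (hf : ∀ ⦃x y⦄, G.Adj x y → Commute (f x) (f y)) :
    RAAG G →* H :=
  PresentedGroup.toGroup <| by
    rintro _ ⟨x, y, hxy, rfl⟩
    rw [map_commutatorElement, FreeGroup.lift_apply_of, FreeGroup.lift_apply_of,
      commutatorElement_eq_one_iff_commute]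
    exact hf hxy

@[simp]
theorem lift_gen {H : Type*} [Group H] (f : V → H)
    (hf : ∀ ⦃x y⦄, G.Adj x y → Commute (f x) (f y)) (v : V) : lift f hf (gen G v) = f v :=
  PresentedGroup.toGroup.of _

theorem hom_ext {H : Type*} [Group H] {φ ψ : RAAG G →* H}
    (h : ∀ v, φ (gen G v) = ψ (gen G v)) : φ = ψ :=
  PresentedGroup.ext h

theorem gen_commute {x y : V} (h : G.Adj x y) : Commute (gen G x) (gen G y) := by
  rw [← commutatorElement_eq_one_iff_commute]
  exact (map_commutatorElement (PresentedGroup.mk _) _ _).symm.trans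
    (PresentedGroup.one_of_mem ⟨x, y, h, rfl⟩)

theorem commute_gen_of_mem_st {a y : V} (h : y ∈ st G a) : Commute (gen G a) (gen G y) := by
  rcases h with rfl | h
  exacts [Commute.refl _, gen_commute h]

section AddFamily

variable (f : ℤ → V → RAAG G) (hf : ∀ n ⦃x y⦄, G.Adj x y → Commute (f n x) (f n y))
  (hadd : ∀ n k v, lift (f n) (hf n) (f k v) = f (n + k) v) (hzero : ∀ v, f 0 v = gen G v)

def autOfAddFamily (n : ℤ) : MulAut (RAAG G) :=
  (lift (f n) (hf n)).toMulEquiv (lift (f (-n)) (hf (-n)))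
    (hom_ext fun v => by simp [hadd, hzero]) (hom_ext fun v => by simp [hadd, hzero])

theorem autOfAddFamily_gen (n : ℤ) (v : V) :
    autOfAddFamily f hf hadd hzero n (gen G v) = f n v :=
  lift_gen (f n) (hf n) v

theorem autOfAddFamily_add (n k : ℤ) :
    autOfAddFamily f hf hadd hzero (n + k) =
      autOfAddFamily f hf hadd hzero n * autOfAddFamily f hf hadd hzero k :=
  MulEquiv.toMonoidHom_injective <| hom_ext fun v => by
    simp only [MulEquiv.coe_toMonoidHom, MulAut.mul_apply, autOfAddFamily_gen]
    exact (hadd n k v).symm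

theorem autOfAddFamily_inv (n : ℤ) :
    (autOfAddFamily f hf hadd hzero n)⁻¹ = autOfAddFamily f hf hadd hzero (-n) :=
  MulEquiv.ext fun _ => rfl

end AddFamily

section Transvection

variable [DecidableEq V] {a b : V}

def transvectionGens (G : SimpleGraph V) (a b : V) (n : ℤ) (v : V) : RAAG G :=
  if v = b then gen G b * gen G a ^ n else gen G v

@[simp]
theorem transvectionGens_self (n : ℤ) : transvectionGens G a b n b = gen G b * gen G a ^ n :=
  if_pos rfl

@[simp]
theorem transvectionGens_of_ne (n : ℤ) {v : V} (hv : v ≠ b) :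
    transvectionGens G a b n v = gen G v :=
  if_neg hv

theorem transvectionGens_commute (hd : Dominates G a b) (n : ℤ) ⦃x y : V⦄ (hxy : G.Adj x y) :
    Commute (transvectionGens G a b n x) (transvectionGens G a b n y) := by
  have key : ∀ ⦃y⦄, G.Adj b y → Commute (gen G b * gen G a ^ n) (gen G y) := fun y hby =>
    (gen_commute hby).mul_left ((commute_gen_of_mem_st (hd hby)).zpow_left n)
  by_cases hx : x = b <;> by_cases hy : y = b
  · exact absurd (hx.trans hy.symm) hxy.ne
  · subst hx; simpa [hy] using key hxy
  · subst hy; simpa [hx] using (key hxy.symm).symm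
  · simpa [hx, hy] using gen_commute hxy

theorem lift_transvectionGens (hab : a ≠ b) (hd : Dominates G a b) (n k : ℤ) (v : V) :
    lift (transvectionGens G a b n) (transvectionGens_commute hd n) (transvectionGens G a b k v) =
      transvectionGens G a b (n + k) v := by
  by_cases hv : v = b
  · subst hv
    simp [transvectionGens_of_ne _ hab, zpow_add, mul_assoc]
  · simp [hv]

theorem transvectionGens_zero (v : V) : transvectionGens G a b 0 v = gen G v := by
  by_cases hv : v = b <;> simp [hv]

def transvection (hab : a ≠ b) (hd : Dominates G a b) : ℤ → MulAut (RAAG G) :=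
  autOfAddFamily (transvectionGens G a b) (transvectionGens_commute hd)
    (lift_transvectionGens hab hd) transvectionGens_zero

variable (hab : a ≠ b) (hd : Dominates G a b)

theorem transvection_gen_self (n : ℤ) :
    transvection hab hd n (gen G b) = gen G b * gen G a ^ n := by
  simp [transvection, autOfAddFamily_gen]

theorem transvection_gen_of_ne (n : ℤ) {v : V} (hv : v ≠ b) :
    transvection hab hd n (gen G v) = gen G v := by
  simp [transvection, autOfAddFamily_gen, hv]

theorem transvection_add (n k : ℤ) :
    transvection hab hd (n + k) = transvection hab hd n * transvection hab hd k :=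
  autOfAddFamily_add ..

theorem transvection_inv (n : ℤ) : (transvection hab hd n)⁻¹ = transvection hab hd (-n) :=
  autOfAddFamily_inv ..

theorem transvection_mem_closure {S : Set V} (ha : a ∈ S) (n : ℤ) {x : RAAG G}
    (hx : x ∈ Subgroup.closure (gen G '' S)) :
    transvection hab hd n x ∈ Subgroup.closure (gen G '' S) := by
  refine (Subgroup.closure_le (K := (Subgroup.closure (gen G '' S)).comap
    (transvection hab hd n).toMonoidHom)).2 ?_ hx
  rintro _ ⟨v, hv, rfl⟩
  have hgen : ∀ u ∈ S, gen G u ∈ Subgroup.closure (gen G '' S) := fun u hu =>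
    Subgroup.subset_closure ⟨u, hu, rfl⟩
  by_cases hvb : v = b
  · subst hvb
    simpa [transvection_gen_self] using mul_mem (hgen v hv) (zpow_mem (hgen a ha) n)
  · simpa [transvection_gen_of_ne hab hd n hvb] using hgen v hv

end Transvection

section PartialConj

variable {a : V} {Y : Set V} [DecidablePred (· ∈ Y)]

def partialConjGens (G : SimpleGraph V) (a : V) (Y : Set V) [DecidablePred (· ∈ Y)] (n : ℤ)
    (v : V) : RAAG G :=
  if v ∈ Y then (gen G a ^ n)⁻¹ * gen G v * gen G a ^ n else gen G v

@[simp]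
theorem partialConjGens_of_mem (n : ℤ) {v : V} (hv : v ∈ Y) :
    partialConjGens G a Y n v = (gen G a ^ n)⁻¹ * gen G v * gen G a ^ n :=
  if_pos hv

@[simp]
theorem partialConjGens_of_notMem (n : ℤ) {v : V} (hv : v ∉ Y) :
    partialConjGens G a Y n v = gen G v :=
  if_neg hv

theorem partialConjGens_commute (hY : IsCompOf G (st G a)ᶜ Y) (n : ℤ) ⦃x y : V⦄
    (hxy : G.Adj x y) : Commute (partialConjGens G a Y n x) (partialConjGens G a Y n y) := by
  have key : ∀ ⦃x y⦄, G.Adj x y → x ∈ Y → y ∉ Y →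
      Commute ((gen G a ^ n)⁻¹ * gen G x * gen G a ^ n) (gen G y) := fun x y hxy hx hy => by
    have hay : Commute (gen G a) (gen G y) :=
      commute_gen_of_mem_st (not_not.1 fun h => hy (hY.mem_of_adj hx hxy h))
    exact (((hay.zpow_left n).inv_left).mul_left (gen_commute hxy)).mul_left (hay.zpow_left n)
  by_cases hx : x ∈ Y <;> by_cases hy : y ∈ Y
  · simpa [hx, hy] using (gen_commute hxy).conj (gen G a ^ n)⁻¹
  · simpa [hx, hy] using key hxy hx hy
  · simpa [hx, hy] using (key hxy.symm hy hx).symm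
  · simpa [hx, hy] using gen_commute hxy

theorem lift_partialConjGens (hY : IsCompOf G (st G a)ᶜ Y) (n k : ℤ) (v : V) :
    lift (partialConjGens G a Y n) (partialConjGens_commute hY n) (partialConjGens G a Y k v) =
      partialConjGens G a Y (n + k) v := by
  by_cases hv : v ∈ Y
  · simp [hv, hY.notMem_self, zpow_add, mul_assoc]
  · simp [hv]

theorem partialConjGens_zero (v : V) : partialConjGens G a Y 0 v = gen G v := by
  by_cases hv : v ∈ Y <;> simp [hv]

def partialConj (hY : IsCompOf G (st G a)ᶜ Y) : ℤ → MulAut (RAAG G) :=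
  autOfAddFamily (partialConjGens G a Y) (partialConjGens_commute hY) (lift_partialConjGens hY)
    partialConjGens_zero

variable (hY : IsCompOf G (st G a)ᶜ Y)

theorem partialConj_gen_of_mem (n : ℤ) {v : V} (hv : v ∈ Y) :
    partialConj hY n (gen G v) = (gen G a ^ n)⁻¹ * gen G v * gen G a ^ n := by
  simp [partialConj, autOfAddFamily_gen, hv]

theorem partialConj_gen_of_notMem (n : ℤ) {v : V} (hv : v ∉ Y) :
    partialConj hY n (gen G v) = gen G v := by
  simp [partialConj, autOfAddFamily_gen, hv]

theorem partialConj_add (n k : ℤ) :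
    partialConj hY (n + k) = partialConj hY n * partialConj hY k :=
  autOfAddFamily_add ..

end PartialConj

section ExpSum

variable [DecidableEq V]

def expSum (G : SimpleGraph V) (y : V) : RAAG G →* Multiplicative ℤ :=
  lift (fun v => if v = y then Multiplicative.ofAdd 1 else 1) fun _ _ _ => Commute.all _ _

theorem expSum_gen (y v : V) :
    expSum G y (gen G v) = if v = y then Multiplicative.ofAdd 1 else 1 :=
  lift_gen _ _ v

theorem expSum_gen_zpow_self (y : V) (n : ℤ) :
    expSum G y (gen G y ^ n) = Multiplicative.ofAdd n := by
  simp [expSum_gen, ← ofAdd_zsmul]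

theorem expSum_transvection {a b : V} (hab : a ≠ b) (hd : Dominates G a b) (n : ℤ)
    (x : RAAG G) :
    expSum G a (transvection hab hd n x) = expSum G a x * expSum G b x ^ n := by
  have h : (expSum G a).comp (transvection hab hd n).toMonoidHom =
      expSum G a * expSum G b ^ n := hom_ext fun v => by
    by_cases hv : v = b
    · subst hv
      simp [transvection_gen_self, expSum_gen]
    · simp [transvection_gen_of_ne hab hd n hv, expSum_gen, hv]
  exact DFunLike.congr_fun h x

/-- Map to the Heisenberg group by `gen y ↦ ⟨1, 0, 0⟩` and `gen v ↦ ⟨0, 1, 0⟩` for `v ∉ st y`: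
the first coordinate is the exponent sum in `y`, and it vanishes on everything commuting with
`⟨0, 1, 0⟩`. -/
theorem expSum_eq_one_of_conj {y a₁ a₂ : V} (h₁ : a₁ ∉ st G y) (h₂ : a₂ ∉ st G y)
    {g w : RAAG G} (hg₂ : MulAut.conj g (gen G a₂) = gen G a₂)
    (hg₁ : MulAut.conj g (gen G a₁) = w⁻¹ * gen G a₁ * w) : expSum G y w = 1 := by
  classical
  set L : Heisenberg := ⟨0, 1, 0⟩
  set f : V → Heisenberg := fun v => if v = y then ⟨1, 0, 0⟩ else if G.Adj y v then 1 else L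
    with hf
  have hf_comm : ∀ ⦃p q⦄, G.Adj p q → Commute (f p) (f q) := by
    intro p q hpq
    by_cases hp : p = y
    · subst hp
      simp [hf, hpq.ne', hpq]
    by_cases hq : q = y
    · subst hq
      simp [hf, hpq.ne, G.adj_symm hpq]
    simp only [hf, if_neg hp, if_neg hq]
    split_ifs <;> first | exact Commute.refl _ | exact Commute.one_left _ |
      exact Commute.one_right _
  set ρ := lift f hf_comm
  have hρ : ∀ {a}, a ∉ st G y → ρ (gen G a) = L := fun {a} ha => by
    simp [ρ, hf, show a ≠ y from fun h => ha (h ▸ Set.mem_insert _ _),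
      show ¬ G.Adj y a from fun h => ha (Set.mem_insert_of_mem _ h)]
  have hexp : Heisenberg.fstHom.comp ρ = expSum G y := hom_ext fun v => by
    by_cases hv : v = y
    · simp [ρ, hf, hv, expSum_gen, Heisenberg.fstHom]
    · by_cases hyv : G.Adj y v <;> simp [ρ, hf, hv, hyv, expSum_gen, Heisenberg.fstHom, L]
  have e₁ := congrArg ρ hg₁
  have e₂ := congrArg ρ hg₂
  simp only [MulAut.conj_apply, map_mul, map_inv, hρ h₁, hρ h₂] at e₁ e₂
  have hcomm : Commute (ρ w) L := calc
    ρ w * L = ρ w * ((ρ w)⁻¹ * L * ρ w) := by rw [← e₁, e₂]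
    _ = L * ρ w := by group
  rw [← hexp]
  simp [Heisenberg.fstHom, Heisenberg.a_eq_zero_of_commute hcomm]

end ExpSum

variable {act : RAAG G → RAAG G → RAAG G} {U : Set V} {W : MulAut (RAAG G)} {w : RAAG G}
  {K : Subgroup (OutG G)}

/-- `act w` is `(· * w)` for twists built from transvections and `(w⁻¹ * · * w)` for twists built
from partial conjugations. -/
def IsTwist (act : RAAG G → RAAG G → RAAG G) (U : Set V) (W : MulAut (RAAG G))
    (w : RAAG G) : Prop :=
  (∀ v ∈ U, W (gen G v) = act w (gen G v)) ∧ ∀ v ∉ U, W (gen G v) = gen G v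

theorem IsTwist.apply_of_mem_closure (hW : IsTwist act U W w) {x : RAAG G}
    (hx : x ∈ Subgroup.closure (gen G '' Uᶜ)) : W x = x :=
  (Subgroup.closure_le (K := W.toMonoidHom.eqLocus (MonoidHom.id _))).2
    (by rintro _ ⟨v, hv, rfl⟩; exact hW.2 v hv) hx

theorem IsTwist.commutatorElement
    (hact : ∀ (T W : MulAut (RAAG G)) (x w : RAAG G), T x = x → W x = act w x → W w = w →
      W (T⁻¹ w) = T⁻¹ w → ⁅T, W⁆ x = act (T w * w⁻¹) x)
    (hW : IsTwist act U W w) (hw : w ∈ Subgroup.closure (gen G '' Uᶜ)) {T : MulAut (RAAG G)}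
    (hTU : ∀ v ∈ U, T (gen G v) = gen G v)
    (hT : ∀ x ∈ Subgroup.closure (gen G '' Uᶜ), T⁻¹ x ∈ Subgroup.closure (gen G '' Uᶜ)) :
    IsTwist act U ⁅T, W⁆ (T w * w⁻¹) :=
  ⟨fun v hv => hact T W _ w (hTU v hv) (hW.1 v hv) (hW.apply_of_mem_closure hw)
      (hW.apply_of_mem_closure (hT w hw)),
    fun v hv => MulAut.commutatorElement_apply_eq_self (hW.2 v hv)
      (hW.apply_of_mem_closure (hT _ (Subgroup.subset_closure ⟨v, hv, rfl⟩)))⟩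

theorem exists_conj_eq_of_mem_lowerCentralSeries [Group.IsNilpotent K] {n : ℕ}
    (hn : Group.nilpotencyClass K ≤ n)
    (hW : QuotientGroup.mk' (Inn (RAAG G)) W ∈ K.lowerCentralSeries n) :
    ∃ g, W = MulAut.conj g := by
  rw [Subgroup.lowerCentralSeries_eq_bot_of_nilpotencyClass_le hn, Subgroup.mem_bot,
    QuotientGroup.mk'_apply, QuotientGroup.eq_one_iff] at hW
  obtain ⟨g, rfl⟩ := hW
  exact ⟨g, rfl⟩

theorem exists_twist_mem_lowerCentralSeries [DecidableEq V] (hK : K.FiniteIndex)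
    (hact : ∀ (T W : MulAut (RAAG G)) (x w : RAAG G), T x = x → W x = act w x → W w = w →
      W (T⁻¹ w) = T⁻¹ w → ⁅T, W⁆ x = act (T w * w⁻¹) x)
    {b : V} {W₀ : MulAut (RAAG G)} {w₀ : RAAG G} (hW₀ : IsTwist act U W₀ w₀)
    (hw₀ : w₀ ∈ Subgroup.closure (gen G '' Uᶜ)) (hb : expSum G b w₀ ≠ 1)
    (hW₀K : QuotientGroup.mk' (Inn (RAAG G)) W₀ ∈ K) :
    ∀ (s : List V) (y : V), IsDomChain G (y :: s) →
      (y :: s).getLast (List.cons_ne_nil y s) = b → (∀ v ∈ y :: s, v ∉ U) →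
      ∃ W w, IsTwist act U W w ∧ w ∈ Subgroup.closure (gen G '' Uᶜ) ∧ expSum G y w ≠ 1 ∧
        QuotientGroup.mk' (Inn (RAAG G)) W ∈ K.lowerCentralSeries s.length := by
  intro s
  induction s with
  | nil =>
    rintro y - rfl -
    exact ⟨W₀, w₀, hW₀, hw₀, hb, hW₀K⟩
  | cons z s ih =>
    intro y hl hlast hU
    obtain ⟨hyz, hd, hl'⟩ := hl.cons_cons
    obtain ⟨W, w, hW, hw, hz, hWK⟩ :=
      ih z hl' hlast fun v hv => hU v (List.mem_cons_of_mem y hv)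
    obtain ⟨m, hm, hmK⟩ := exists_ne_zero_mem_of_map_add hK
      (fun n => QuotientGroup.mk' (Inn (RAAG G)) (transvection hyz hd n))
      fun n k => by rw [transvection_add, map_mul]
    have hyU : y ∈ Uᶜ := hU y List.mem_cons_self
    have hzU : z ∉ U := hU z (List.mem_cons_of_mem y List.mem_cons_self)
    refine ⟨⁅transvection hyz hd m, W⁆, transvection hyz hd m w * w⁻¹, ?_, ?_, ?_, ?_⟩
    · refine hW.commutatorElement hact hw
        (fun v hv => transvection_gen_of_ne hyz hd m (ne_of_mem_of_not_mem hv hzU))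
        fun x hx => ?_
      rw [transvection_inv]
      exact transvection_mem_closure hyz hd hyU (-m) hx
    · exact mul_mem (transvection_mem_closure hyz hd hyU m hw) (inv_mem hw)
    · rw [map_mul, map_inv, expSum_transvection, mul_inv_cancel_comm]
      exact (IsMulTorsionFree.zpow_eq_one_iff_left hm).not.2 hz
    · rw [map_commutatorElement, List.length_cons, Subgroup.lowerCentralSeries_succ,
        Subgroup.commutator_comm]
      exact Subgroup.commutator_mem_commutator hmK hWK

theorem length_le_nilpotencyClass_add_one_of_isDomChain (hK : K.FiniteIndex)
    [Group.IsNilpotent K] {l : List V} (hl : IsDomChain G l) :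
    l.length ≤ Group.nilpotencyClass K + 1 := by
  classical
  obtain ⟨L, x₁, rfl⟩ := (List.eq_nil_or_concat' l).resolve_left hl.1
  rcases L with _ | ⟨y, s⟩
  · simp
  by_contra! hlen
  simp only [List.length_append, List.length_cons, List.length_nil] at hlen
  obtain ⟨hchain, hd, hx₁⟩ := hl.of_append_singleton
  set x₂ := (y :: s).getLast (List.cons_ne_nil y s)
  have hne : x₂ ≠ x₁ := fun h => hx₁ (h ▸ List.getLast_mem _)
  obtain ⟨m, hm, hmK⟩ := exists_ne_zero_mem_of_map_add hK
    (fun n => QuotientGroup.mk' (Inn (RAAG G)) (transvection hne hd n))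
    fun n k => by rw [transvection_add, map_mul]
  have hW₀ : IsTwist (fun w x => x * w) {x₁} (transvection hne hd m) (gen G x₂ ^ m) :=
    ⟨fun v hv => hv ▸ transvection_gen_self hne hd m,
      fun v hv => transvection_gen_of_ne hne hd m hv⟩
  obtain ⟨W, w, hW, -, hw, hWK⟩ := exists_twist_mem_lowerCentralSeries hK
    (fun _ _ _ _ => MulAut.commutatorElement_apply_of_apply_eq_mul) hW₀
    (zpow_mem (Subgroup.subset_closure (Set.mem_image_of_mem _ hne)) m)
    (by rwa [expSum_gen_zpow_self, Ne, ofAdd_eq_one]) hmK s y hchain rfl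
    fun v hv hvx => hx₁ (hvx ▸ hv)
  obtain ⟨g, rfl⟩ := exists_conj_eq_of_mem_lowerCentralSeries (by omega) hWK
  apply hw
  simpa [MulAut.conj_apply] using congrArg (expSum G y) (hW.1 x₁ rfl)

theorem length_le_nilpotencyClass_of_isSSPChain (h : ¬ SepIntLinks G) (hK : K.FiniteIndex)
    [Group.IsNilpotent K] {l : List V} {x x₁ : V} (hl : IsSSPChain G l x x₁) :
    l.length ≤ Group.nilpotencyClass K := by
  classical
  obtain ⟨hchain, hhead, hlast, Y₁, Y₂, hY₁, hY₂, hne, hY₁x, hY₂x⟩ := hl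
  obtain ⟨y, s, rfl⟩ := List.exists_cons_of_ne_nil hchain.1
  obtain rfl : y = x := by simpa using hhead
  have hlast' : (y :: s).getLast (List.cons_ne_nil y s) = x₁ := by
    simpa [List.getLast?_eq_some_getLast] using hlast
  by_contra! hlen
  have hY : ∀ v ∈ y :: s, v ∉ Y₁ := fun v hv hvY => hY₁.2.1 hvY <|
    mem_st_of_dominates h hY₁ hY₂ hne (hlast' ▸ hchain.dominates_getLast hv)
  obtain ⟨n, hn, hnK⟩ := exists_ne_zero_mem_of_map_add hK
    (fun n => QuotientGroup.mk' (Inn (RAAG G)) (partialConj hY₁ n))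
    fun n k => by rw [partialConj_add, map_mul]
  have hW₀ : IsTwist (fun w x => w⁻¹ * x * w) Y₁ (partialConj hY₁ n) (gen G x₁ ^ n) :=
    ⟨fun v hv => partialConj_gen_of_mem hY₁ n hv,
      fun v hv => partialConj_gen_of_notMem hY₁ n hv⟩
  obtain ⟨W, w, hW, -, hw, hWK⟩ := exists_twist_mem_lowerCentralSeries hK
    (fun _ _ _ _ => MulAut.commutatorElement_apply_of_apply_eq_conj) hW₀
    (zpow_mem (Subgroup.subset_closure (Set.mem_image_of_mem _ hY₁.notMem_self)) n)
    (by rwa [expSum_gen_zpow_self, Ne, ofAdd_eq_one]) hnK s y hchain hlast' hY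
  obtain ⟨g, rfl⟩ := exists_conj_eq_of_mem_lowerCentralSeries (by simpa using hlen) hWK
  obtain ⟨a₁, ha₁, ha₁y⟩ := Set.not_subset.1 hY₁x
  obtain ⟨a₂, ha₂, ha₂y⟩ := Set.not_subset.1 hY₂x
  exact hw (expSum_eq_one_of_conj ha₁y ha₂y (hW.2 a₂ (hY₂.notMem_of_ne hY₁ hne.symm ha₂))
    (hW.1 a₁ ha₁))

end RAAG

theorem nilpotencyClass_ge_depth_general (G : SimpleGraph V) (h2 : ¬ SepIntLinks G) :
    ∀ (K : Subgroup (OutG G)) (hn : Group.IsNilpotent ↥K), K.FiniteIndex →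
      gdepth G ≤ Group.nilpotencyClass ↥K := by
  intro K _ hK
  refine csSup_le' ?_
  rintro _ ⟨x, rfl⟩
  refine max_le (csSup_le' ?_) (csSup_le' ?_)
  · rintro d ⟨l, hl, -, hlen⟩
    have := RAAG.length_le_nilpotencyClass_add_one_of_isDomChain hK hl
    omega
  · rintro d ⟨l, x₁, hl, rfl⟩
    exact RAAG.length_le_nilpotencyClass_of_isSSPChain h2 hK hl

/-- If `Γ` has no domination-equivalent pair and no separating
intersection of links, then every finite-index nilpotent subgroup of `Out(A_Γ)` has
nilpotency class at least `depth(Γ)`. -/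
theorem nilpotencyClass_ge_depth [Fintype V] (G : SimpleGraph V)
    (h1 : ¬ DomEquivPair G) (h2 : ¬ SepIntLinks G) :
    ∀ (K : Subgroup (OutG G)) (hn : Group.IsNilpotent ↥K), K.FiniteIndex →
      gdepth G ≤ Group.nilpotencyClass ↥K :=
  nilpotencyClass_ge_depth_general G h2
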